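/- arXiv:1812.01826 — 5 statements merged into one kernel-verified Lean document; each statement's English description precedes it below -/
import Mathlib

section
/- The t-derivative of Λ(t,T) at t = 0 equals βK(1+β)(1 - e^{-KT}), which is nonnegative for all K ∈ ℝ and β ≥ 0. -/
open Real

/-- The function `Λ(t, T)` of the paper, as a function of `t`. -/
noncomputable def lambdaFun (β K T t : ℝ) : ℝ :=
  1 + β * (1 - exp (-K * (T - t))) + (β + β ^ 2) * (1 - exp (-K * t))
    + (β ^ 2 / 2) * (exp (-K * (t + T)) - exp (-K * (T - t)))

theorem hasDerivAt_lambdaFun (β K T t : ℝ) :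
    HasDerivAt (lambdaFun β K T)
      (-β * K * exp (-K * (T - t)) + (β + β ^ 2) * K * exp (-K * t)
        - (β ^ 2 * K / 2) * (exp (-K * (t + T)) + exp (-K * (T - t)))) t := by
  have hexp_sub := (((hasDerivAt_id' t).const_sub T).const_mul (-K)).exp
  have hexp := ((hasDerivAt_id' t).const_mul (-K)).exp
  have hexp_add := (((hasDerivAt_id' t).add_const T).const_mul (-K)).exp
  have h := (((hasDerivAt_const t 1).add (((hasDerivAt_const t 1).sub hexp_sub).const_mul β)).add
    (((hasDerivAt_const t 1).sub hexp).const_mul (β + β ^ 2))).add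
    ((hexp_add.sub hexp_sub).const_mul (β ^ 2 / 2))
  exact h.congr_deriv (by ring)

theorem mul_one_sub_exp_neg_mul_nonneg (K : ℝ) {T : ℝ} (hT : 0 ≤ T) :
    0 ≤ K * (1 - exp (-K * T)) := by
  rcases le_total 0 K with hK | hK
  · have : exp (-K * T) ≤ 1 := exp_le_one_iff.mpr (by nlinarith)
    exact mul_nonneg hK (by linarith)
  · have : 1 ≤ exp (-K * T) := one_le_exp_iff.mpr (by nlinarith)
    exact mul_nonneg_of_nonpos_of_nonpos hK (by linarith)

theorem lambda_deriv_at_zero (β K T : ℝ) (hβ : 0 ≤ β) (hT : 0 < T) :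
    deriv (fun t : ℝ => 1 + β * (1 - exp (-K * (T - t))) + (β + β ^ 2) * (1 - exp (-K * t))
        + (β ^ 2 / 2) * (exp (-K * (t + T)) - exp (-K * (T - t)))) 0
      = β * K * (1 + β) * (1 - exp (-K * T))
    ∧ 0 ≤ β * K * (1 + β) * (1 - exp (-K * T)) := by
  refine ⟨(hasDerivAt_lambdaFun β K T 0).deriv.trans ?_, ?_⟩
  · simp only [sub_zero, mul_zero, zero_add, exp_zero]
    ring
  · calc (0 : ℝ) ≤ β * (1 + β) * (K * (1 - exp (-K * T))) :=
          mul_nonneg (by positivity) (mul_one_sub_exp_neg_mul_nonneg K hT.le)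
      _ = β * K * (1 + β) * (1 - exp (-K * T)) := by ring
end

section
/- If K > 0 and β > 0, then the unique critical point of t ↦ Λ(t,T) in (0,T) is t₀ with e^{2Kt₀} = (1 + (β/(2+β))(1 - e^{-KT}))·e^{KT}, and this point satisfies 0 < t₀ < T. -/
/-!
Expanding the exponentials, `Λ(t) = c + a e^{Kt} + b e^{-Kt}` with `a, b < 0`, so
`Λ'(t) = K e^{-Kt} (a e^{2Kt} - b)` vanishes exactly when `e^{2Kt} = b / a`. Since
`t ↦ e^{2Kt}` is injective this critical point is unique, and `b / a` turns out to be
`(1 + β/(2+β) (1 - e^{-KT})) e^{KT}`, which lies strictly between `1` and `e^{2KT}`.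
-/

open Real

section ExpCombination

variable {K : ℝ} (a b c : ℝ)

theorem hasDerivAt_exp_combination (t : ℝ) :
    HasDerivAt (fun t => c + a * exp (K * t) + b * exp (-(K * t)))
      (K * (a * exp (K * t) - b * exp (-(K * t)))) t := by
  have hlin : HasDerivAt (fun t => K * t) K t := by
    simpa using (hasDerivAt_id t).const_mul K
  have hneg : HasDerivAt (fun t => -(K * t)) (-K) t := hlin.neg
  exact (((hlin.exp.const_mul a).const_add c).add (hneg.exp.const_mul b)).congr_deriv (by ring)

variable {a b}

theorem exp_combination_deriv_eq_zero_iff (hK : K ≠ 0) (ha : a ≠ 0) (hba : 0 < b / a)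
    (t : ℝ) :
    K * (a * exp (K * t) - b * exp (-(K * t))) = 0 ↔ t = log (b / a) / (2 * K) := by
  have hfactor : K * (a * exp (K * t) - b * exp (-(K * t)))
      = K * a * exp (-(K * t)) * (exp (2 * K * t) - b / a) := by
    rw [show 2 * K * t = K * t + K * t by ring, exp_add, exp_neg]
    field_simp
  have hexp : exp (2 * K * t) = b / a ↔ 2 * K * t = log (b / a) := by
    nth_rw 1 [← exp_log hba]
    exact exp_eq_exp
  rw [hfactor, mul_eq_zero, or_iff_right (mul_ne_zero (mul_ne_zero hK ha) (exp_ne_zero _)),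
    sub_eq_zero, hexp, eq_div_iff (mul_ne_zero two_ne_zero hK), mul_comm t]

end ExpCombination

theorem one_lt_crit_ratio {β s : ℝ} (hβ : 0 < β) (hs : 0 < s) :
    1 < (1 + β / (2 + β) * (1 - exp (-s))) * exp s := by
  have hx : exp (-s) < 1 := exp_lt_one_iff.mpr (neg_lt_zero.mpr hs)
  have hratio : 1 < 1 + β / (2 + β) * (1 - exp (-s)) := by
    have : 0 < β / (2 + β) * (1 - exp (-s)) := by
      apply mul_pos (by positivity); linarith
    linarith
  exact one_lt_mul_of_lt_of_le hratio (one_le_exp hs.le)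

theorem crit_ratio_lt_exp_two_mul {β s : ℝ} (hβ : 0 < β) (hs : 0 < s) :
    (1 + β / (2 + β) * (1 - exp (-s))) * exp s < exp (2 * s) := by
  rw [two_mul, exp_add, mul_lt_mul_iff_left₀ (exp_pos s), exp_neg]
  have hy : 1 < exp s := one_lt_exp_iff.mpr hs
  have hc : β / (2 + β) < 1 := (div_lt_one (by linarith)).mpr (by linarith)
  -- `y - (1 + c (1 - 1/y)) = (y - 1)(y - c)/y` with `y = e^s > 1 > c`
  have hfactor : exp s - (1 + β / (2 + β) * (1 - (exp s)⁻¹))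
      = (exp s - 1) * (exp s - β / (2 + β)) / exp s := by
    field_simp
    ring
  have : 0 < (exp s - 1) * (exp s - β / (2 + β)) / exp s :=
    div_pos (mul_pos (by linarith) (by linarith)) (exp_pos s)
  linarith

theorem crit_coeff_div_eq {β : ℝ} (hβ : β ≠ 0) (hβ2 : 2 + β ≠ 0) (s : ℝ) :
    (-(β + β ^ 2) + β ^ 2 / 2 * exp (-s)) / -((β + β ^ 2 / 2) * exp (-s))
      = (1 + β / (2 + β) * (1 - exp (-s))) * exp s := by
  have hβ2' : 2 * β + β ^ 2 ≠ 0 := by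
    rw [show 2 * β + β ^ 2 = β * (2 + β) by ring]; exact mul_ne_zero hβ hβ2
  rw [exp_neg]
  field_simp
  ring

theorem lambda_crit_point_K_pos (β K T : ℝ) (hK : 0 < K) (hβ : 0 < β) (hT : 0 < T)
    (Λ : ℝ → ℝ)
    (hΛ : ∀ t, Λ t = 1 + β * (1 - exp (-K * (T - t))) + (β + β ^ 2) * (1 - exp (-K * t))
        + (β ^ 2 / 2) * (exp (-K * (t + T)) - exp (-K * (T - t)))) :
    ∃ t₀ : ℝ, 0 < t₀ ∧ t₀ < T
      ∧ exp (2 * K * t₀) = (1 + (β / (2 + β)) * (1 - exp (-K * T))) * exp (K * T)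
      ∧ deriv Λ t₀ = 0
      ∧ ∀ t, deriv Λ t = 0 → t = t₀ := by
  set a := -((β + β ^ 2 / 2) * exp (-K * T))
  set b := -(β + β ^ 2) + β ^ 2 / 2 * exp (-K * T)
  set r := (1 + (β / (2 + β)) * (1 - exp (-K * T))) * exp (K * T)
  have hΛ_eq : Λ = fun t => (1 + β + β + β ^ 2) + a * exp (K * t) + b * exp (-(K * t)) := by
    funext t
    rw [hΛ, show -K * (T - t) = -K * T + K * t by ring, show -K * t = -(K * t) by ring,
      show -K * (t + T) = -K * T + -(K * t) by ring, exp_add, exp_add]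
    ring
  have hderiv (t : ℝ) : deriv Λ t = K * (a * exp (K * t) - b * exp (-(K * t))) :=
    hΛ_eq ▸ (hasDerivAt_exp_combination a b _ t).deriv
  have ha : a ≠ 0 := neg_ne_zero.mpr (by positivity)
  have hba : b / a = r := by
    have h := crit_coeff_div_eq hβ.ne' (by positivity) (K * T)
    rwa [← neg_mul] at h
  have hKT : 0 < K * T := mul_pos hK hT
  have hr1 : 1 < r := by
    have h := one_lt_crit_ratio hβ hKT
    rwa [← neg_mul] at h
  have hr2 : r < exp (2 * K * T) := by
    have h := crit_ratio_lt_exp_two_mul hβ hKT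
    rwa [← neg_mul, ← mul_assoc] at h
  have hcrit (t : ℝ) : deriv Λ t = 0 ↔ t = log r / (2 * K) := by
    rw [hderiv, exp_combination_deriv_eq_zero_iff hK.ne' ha (hba ▸ by linarith), hba]
  refine ⟨log r / (2 * K), ?_, ?_, ?_, (hcrit _).mpr rfl, fun t => (hcrit t).mp⟩
  · exact div_pos (log_pos hr1) (by positivity)
  · rw [div_lt_iff₀ (by positivity), log_lt_iff_lt_exp (by linarith)]
    rwa [mul_comm T]
  · rw [mul_div_cancel₀ _ (by positivity), exp_log (by linarith)]
end

section
/- If K > 0, then sup_{s∈[0,T]} A(s) = A(s₀) with s₀ = (1/(2K))log(2e^{KT}-1), and this supremum equals (1/(2K²))·[2 - (2 - e^{-KT})/√(2e^{KT}-1) - e^{-KT}·√(2e^{KT}-1)]. -/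
/-!
Writing `x = exp (-K s)`, `a = exp (-K T)` and `L = 2 exp (K T) - 1`, one has `2 - a = a L` and
`2 K² A(s) = 2 - a (L x + 1/x)`. By AM-GM, `L x + 1/x ≥ 2 √L` with equality at `x = 1/√L`,
i.e. at `s = s₀`, and `s₀ ∈ [0, T]` because `1 ≤ L ≤ exp (2 K T)`.
-/

open Real Set

lemma two_mul_sqrt_le_mul_add_inv {L x : ℝ} (hL : 0 ≤ L) (hx : 0 < x) :
    2 * √L ≤ L * x + x⁻¹ := by
  have hsq : L * x + x⁻¹ - 2 * √L = (√L * x - 1) ^ 2 / x := by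
    field_simp
    linear_combination (-x ^ 2) * sq_sqrt hL
  have : 0 ≤ (√L * x - 1) ^ 2 / x := by positivity
  linarith

lemma one_le_two_mul_exp_sub_one {y : ℝ} (hy : 0 ≤ y) : 1 ≤ 2 * exp y - 1 := by
  linarith [one_le_exp hy]

lemma log_two_mul_exp_sub_one_div_two_mem_Icc {y : ℝ} (hy : 0 ≤ y) :
    log (2 * exp y - 1) / 2 ∈ Icc 0 y := by
  have hL := one_le_two_mul_exp_sub_one hy
  have hle : 2 * exp y - 1 ≤ exp (2 * y) := by
    rw [two_mul y, exp_add]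
    nlinarith [sq_nonneg (exp y - 1)]
  have hlog : log (2 * exp y - 1) ≤ 2 * y :=
    (log_le_iff_le_exp (by linarith)).2 hle
  exact ⟨by linarith [log_nonneg hL], by linarith⟩

/-- `A` in the units `K = 1`, `T = y`: in general `A s = normalizedA (K * T) (K * s) / (2 * K ^ 2)`. -/
noncomputable def normalizedA (y u : ℝ) : ℝ :=
  2 - 2 * exp (-u) + exp (-(y + u)) - exp (-(y - u))

lemma normalizedA_eq (y u : ℝ) :
    normalizedA y u = 2 - exp (-y) * ((2 * exp y - 1) * exp (-u) + (exp (-u))⁻¹) := by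
  have h₁ : exp (-(y + u)) = exp (-y) * exp (-u) := by rw [← exp_add]; ring_nf
  have h₂ : exp (-(y - u)) = exp (-y) * (exp (-u))⁻¹ := by
    rw [← exp_neg (-u), ← exp_add]; ring_nf
  have h₃ : exp (-y) * exp y = 1 := by rw [← exp_add]; simp
  rw [normalizedA, h₁, h₂]
  linear_combination (2 * exp (-u)) * h₃

lemma normalizedA_le (y u : ℝ) (hy : 0 ≤ y) :
    normalizedA y u ≤ 2 - 2 * exp (-y) * √(2 * exp y - 1) := by
  have hL := one_le_two_mul_exp_sub_one hy
  have hAMGM := two_mul_sqrt_le_mul_add_inv (L := 2 * exp y - 1) (by linarith) (exp_pos (-u))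
  rw [normalizedA_eq]
  linarith [mul_le_mul_of_nonneg_left hAMGM (exp_pos (-y)).le]

lemma normalizedA_log_two_mul_exp_sub_one_div_two {y : ℝ} (hy : 0 ≤ y) :
    normalizedA y (log (2 * exp y - 1) / 2) = 2 - 2 * exp (-y) * √(2 * exp y - 1) := by
  have hL : 0 < 2 * exp y - 1 := by linarith [one_le_two_mul_exp_sub_one hy]
  have hr : 0 < √(2 * exp y - 1) := sqrt_pos.2 hL
  have hx : exp (-(log (2 * exp y - 1) / 2)) = (√(2 * exp y - 1))⁻¹ := by
    rw [exp_neg, exp_half, exp_log hL]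
  rw [normalizedA_eq, hx, inv_inv]
  field_simp
  linear_combination exp (-y) * sq_sqrt hL.le

lemma two_mul_exp_neg_mul_sqrt_eq {y : ℝ} (hy : 0 ≤ y) :
    2 * exp (-y) * √(2 * exp y - 1)
      = (2 - exp (-y)) / √(2 * exp y - 1) + exp (-y) * √(2 * exp y - 1) := by
  have hL : 0 < 2 * exp y - 1 := by linarith [one_le_two_mul_exp_sub_one hy]
  have hr : 0 < √(2 * exp y - 1) := sqrt_pos.2 hL
  have h₁ : exp (-y) * exp y = 1 := by rw [← exp_add]; simp
  field_simp
  linear_combination exp (-y) * sq_sqrt hL.le + 2 * h₁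

theorem A_sup_K_pos (K T : ℝ) (hK : 0 < K) (hT : 0 < T)
    (A : ℝ → ℝ)
    (hA : ∀ s, A s = (1 / (2 * K ^ 2)) * (2 - 2 * exp (-K * s) + exp (-K * (T + s))
        - exp (-K * (T - s)))) :
    IsGreatest (A '' Set.Icc 0 T) (A ((1 / (2 * K)) * Real.log (2 * exp (K * T) - 1)))
    ∧ A ((1 / (2 * K)) * Real.log (2 * exp (K * T) - 1))
      = (1 / (2 * K ^ 2)) * (2 - (2 - exp (-K * T)) / Real.sqrt (2 * exp (K * T) - 1)
          - exp (-K * T) * Real.sqrt (2 * exp (K * T) - 1)) := by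
  have hKT : 0 ≤ K * T := by positivity
  have hA' : ∀ s, A s = (1 / (2 * K ^ 2)) * normalizedA (K * T) (K * s) := fun s ↦ by
    rw [hA, normalizedA]; ring_nf
  have hs₀ : (1 / (2 * K)) * log (2 * exp (K * T) - 1) = log (2 * exp (K * T) - 1) / 2 / K := by
    ring
  set u₀ := log (2 * exp (K * T) - 1) / 2
  have hKs₀ : K * (u₀ / K) = u₀ := by field_simp
  obtain ⟨hu₀, hu₀T⟩ : u₀ ∈ Icc 0 (K * T) := log_two_mul_exp_sub_one_div_two_mem_Icc hKT
  have hmax := normalizedA_log_two_mul_exp_sub_one_div_two hKT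
  rw [hs₀]
  refine ⟨⟨⟨u₀ / K, ⟨by positivity, (div_le_iff₀ hK).2 (by linarith)⟩, rfl⟩, ?_⟩, ?_⟩
  · rintro _ ⟨s, -, rfl⟩
    rw [hA', hA', hKs₀, hmax]
    gcongr
    exact normalizedA_le _ _ hKT
  · rw [hA', hKs₀, hmax, two_mul_exp_neg_mul_sqrt_eq hKT, neg_mul]
    ring
end

section
/- If K > 0, then sup_{t∈[0,T]} Λ(t,T) = (1+β)² - (β + β²/2)·√(1 + (β/(2+β))(1 - e^{-KT}))·e^{-KT/2} - (β + β² - (β²/2)e^{-KT})·e^{-KT/2}/√(1 + (β/(2+β))(1 - e^{-KT})), where Λ(t,T) = 1 + β(1 - e^{-K(T-t)}) + (β+β²)(1 - e^{-Kt}) + (β²/2)(e^{-K(t+T)} - e^{-K(T-t)}). -/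
/-!
Put `u = exp (-K t)`, which runs over `[exp (-K T), 1]` as `t` runs over `[0, T]`, and write
`r = exp (-K T / 2)`, `s = √(1 + β / (2 + β) * (1 - r ^ 2))`. Then
`Λ = (1 + β) ^ 2 - (β + β ^ 2 / 2) * (r ^ 2 / u + s ^ 2 * u)`, and by AM-GM
`r ^ 2 / u + s ^ 2 * u ≥ 2 r s`, with equality at `u = r / s`, which lies in `[r ^ 2, 1]`.
-/

open Real Set

noncomputable def Λ (β K T t : ℝ) : ℝ :=
  1 + β * (1 - exp (-K * (T - t))) + (β + β ^ 2) * (1 - exp (-K * t))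
    + (β ^ 2 / 2) * (exp (-K * (t + T)) - exp (-K * (T - t)))

theorem two_mul_le_sq_div_add_sq_mul (x y : ℝ) {u : ℝ} (hu : 0 < u) :
    2 * x * y ≤ x ^ 2 / u + y ^ 2 * u := by
  have h : x ^ 2 / u + y ^ 2 * u - 2 * x * y = (x - y * u) ^ 2 / u := by
    field_simp; ring
  linarith [div_nonneg (sq_nonneg (x - y * u)) hu.le]

theorem sq_div_add_sq_mul_div {x y : ℝ} (hx : x ≠ 0) (hy : y ≠ 0) :
    x ^ 2 / (x / y) + y ^ 2 * (x / y) = 2 * x * y := by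
  field_simp; ring

theorem exists_mem_Icc_exp_neg_mul_eq {K T u : ℝ} (hK : 0 < K)
    (hu : u ∈ Icc (exp (-K * T)) 1) : ∃ t ∈ Icc 0 T, exp (-K * t) = u := by
  have hu₀ : 0 < u := (exp_pos _).trans_le hu.1
  refine ⟨-log u / K, ⟨?_, ?_⟩, ?_⟩
  · exact div_nonneg (neg_nonneg.mpr (log_nonpos hu₀.le hu.2)) hK.le
  · rw [div_le_iff₀ hK, neg_le]
    simpa [mul_comm] using log_le_log (exp_pos _) hu.1
  · rw [show -K * (-log u / K) = log u by field_simp, exp_log hu₀]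

theorem Λ_eq {β : ℝ} (hβ : 2 + β ≠ 0) (K T : ℝ) :
    Λ β K T = fun t => (1 + β) ^ 2 - (β + β ^ 2 / 2) * (exp (-K * T / 2) ^ 2 / exp (-K * t)
      + (1 + β / (2 + β) * (1 - exp (-K * T))) * exp (-K * t)) := by
  ext t
  have h₁ : exp (-K * (T - t)) = exp (-K * T) / exp (-K * t) := by rw [← exp_sub]; ring_nf
  have h₂ : exp (-K * (t + T)) = exp (-K * T) * exp (-K * t) := by rw [← exp_add]; ring_nf
  have h₃ : exp (-K * T / 2) ^ 2 = exp (-K * T) := by rw [← exp_nat_mul]; ring_nf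
  rw [Λ, h₁, h₂, h₃]
  field_simp
  ring

theorem one_le_one_add_div_two_add_mul {β x : ℝ} (hβ : 0 ≤ β) (hx : x ≤ 1) :
    1 ≤ 1 + β / (2 + β) * (1 - x) :=
  le_add_of_nonneg_right (mul_nonneg (by positivity) (sub_nonneg.2 hx))

theorem div_sqrt_mem_Icc_sq {β r : ℝ} (hβ : 0 ≤ β) (hr₀ : 0 < r) (hr₁ : r ≤ 1) :
    r / √(1 + β / (2 + β) * (1 - r ^ 2)) ∈ Icc (r ^ 2) 1 := by
  set σ := 1 + β / (2 + β) * (1 - r ^ 2)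
  have hr₂ : r ^ 2 ≤ 1 := pow_le_one₀ hr₀.le hr₁
  have hc : β / (2 + β) ≤ 1 := (div_le_one (by positivity)).mpr (by linarith)
  have hs : 1 ≤ √σ := one_le_sqrt.mpr (one_le_one_add_div_two_add_mul hβ hr₂)
  have hrs : r * √σ ≤ 1 := by
    rw [← sqrt_sq hr₀.le, ← sqrt_mul (sq_nonneg r), sqrt_le_one]
    nlinarith [mul_nonneg (sub_nonneg.2 (mul_le_one₀ hc (sq_nonneg r) hr₂)) (sub_nonneg.2 hr₂)]
  constructor
  · rw [le_div_iff₀ (by positivity)]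
    nlinarith
  · exact div_le_one_of_le₀ (hr₁.trans hs) (by positivity)

theorem lambda_sup_K_pos (β K T : ℝ) (hK : 0 < K) (hβ : 0 < β) (hT : 0 < T) :
    IsGreatest ((fun t : ℝ => 1 + β * (1 - exp (-K * (T - t))) + (β + β ^ 2) * (1 - exp (-K * t))
        + (β ^ 2 / 2) * (exp (-K * (t + T)) - exp (-K * (T - t)))) '' Set.Icc 0 T)
      ((1 + β) ^ 2
        - (β + β ^ 2 / 2) * Real.sqrt (1 + (β / (2 + β)) * (1 - exp (-K * T))) * exp (-K * T / 2)
        - (β + β ^ 2 - (β ^ 2 / 2) * exp (-K * T)) * exp (-K * T / 2)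
            / Real.sqrt (1 + (β / (2 + β)) * (1 - exp (-K * T)))) := by
  change IsGreatest (Λ β K T '' Icc 0 T) _
  have hr : exp (-K * T / 2) ^ 2 = exp (-K * T) := by rw [← exp_nat_mul]; ring_nf
  rw [Λ_eq (by positivity), ← hr]
  set r := exp (-K * T / 2)
  have hr₀ : 0 < r := exp_pos _
  have hr₁ : r ≤ 1 := exp_le_one_iff.mpr (by nlinarith)
  have hmem := div_sqrt_mem_Icc_sq hβ.le hr₀ hr₁
  have hσ : 0 < 1 + β / (2 + β) * (1 - r ^ 2) :=
    one_pos.trans_le (one_le_one_add_div_two_add_mul hβ.le (pow_le_one₀ hr₀.le hr₁))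
  set s := √(1 + β / (2 + β) * (1 - r ^ 2))
  have hs₂ : s ^ 2 = 1 + β / (2 + β) * (1 - r ^ 2) := sq_sqrt hσ.le
  have hvalue : (1 + β) ^ 2 - (β + β ^ 2 / 2) * s * r - (β + β ^ 2 - β ^ 2 / 2 * r ^ 2) * r / s
      = (1 + β) ^ 2 - (β + β ^ 2 / 2) * (2 * r * s) := by
    have hq : β + β ^ 2 - β ^ 2 / 2 * r ^ 2 = (β + β ^ 2 / 2) * s ^ 2 := by
      rw [hs₂]; field_simp; ring
    rw [hq]; field_simp; ring
  obtain ⟨t₀, ht₀, he⟩ := exists_mem_Icc_exp_neg_mul_eq hK (by rwa [← hr])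
  rw [hvalue, ← hs₂]
  refine ⟨⟨t₀, ht₀, ?_⟩, ?_⟩
  · dsimp only
    rw [he, sq_div_add_sq_mul_div hr₀.ne' (sqrt_pos.mpr hσ).ne']
  · rintro _ ⟨t, -, rfl⟩
    dsimp only
    gcongr
    exact two_mul_le_sq_div_add_sq_mul _ _ (exp_pos _)
end

section
/- For K > 0, β > 0, T > 0, the supremum sup_{t∈[0,T]} Λ(t,T) is bounded above by (1+β)² - 2√((β + β²/2)(β + β² - (β²/2)e^{-KT}))·e^{-KT/2}. -/
open Real

theorem lambda_sup_bound_K_pos (β K T : ℝ) (hK : 0 < K) (hβ : 0 < β) (hT : 0 < T) :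
    ∀ t ∈ Set.Icc (0 : ℝ) T,
      1 + β * (1 - exp (-K * (T - t))) + (β + β ^ 2) * (1 - exp (-K * t))
        + (β ^ 2 / 2) * (exp (-K * (t + T)) - exp (-K * (T - t)))
      ≤ (1 + β) ^ 2
        - 2 * Real.sqrt ((β + β ^ 2 / 2) * (β + β ^ 2 - (β ^ 2 / 2) * exp (-K * T)))
            * exp (-K * T / 2) := by
  intro t ht
  set x := exp (-K * t) with hx
  set y := exp (-K * (T - t)) with hy
  have hxpos : 0 < x := exp_pos _
  have hypos : 0 < y := exp_pos _
  have hE : exp (-K * T) = x * y := by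
    rw [hx, hy, ← exp_add]; ring_nf
  have hEt : exp (-K * (t + T)) = x * exp (-K * T) := by
    rw [hx, ← exp_add]; ring_nf
  have hEle : exp (-K * T) ≤ 1 := exp_le_one_iff.mpr (by nlinarith)
  set a := β + β ^ 2 / 2 with ha
  set b := β + β ^ 2 - (β ^ 2 / 2) * exp (-K * T) with hb
  have hapos : 0 < a := by positivity
  have hbpos : 0 < b := by rw [hb]; nlinarith [exp_pos (-K*T), sq_nonneg β]
  have hhalf : exp (-K * T / 2) = Real.sqrt (exp (-K * T)) := by
    rw [show exp (-K * T) = exp (-K * T / 2) ^ 2 by rw [sq, ← exp_add]; ring_nf]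
    rw [Real.sqrt_sq (exp_nonneg _)]
  have key : 2 * Real.sqrt (a * b) * exp (-K * T / 2) ≤ a * y + b * x := by
    rw [hhalf, hE]
    have h1 : Real.sqrt (a * b) * Real.sqrt (x * y) = Real.sqrt (a * y) * Real.sqrt (b * x) := by
      rw [← Real.sqrt_mul (mul_nonneg hapos.le hbpos.le),
        ← Real.sqrt_mul (mul_nonneg hapos.le hypos.le)]
      ring_nf
    rw [mul_assoc, h1]
    nlinarith [Real.sq_sqrt (mul_nonneg hapos.le hypos.le),
      Real.sq_sqrt (mul_nonneg hbpos.le hxpos.le),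
      sq_nonneg (Real.sqrt (a * y) - Real.sqrt (b * x)),
      Real.sqrt_nonneg (a * y), Real.sqrt_nonneg (b * x)]
  have hlhs : 1 + β * (1 - y) + (β + β ^ 2) * (1 - x)
      + (β ^ 2 / 2) * (exp (-K * (t + T)) - y) = (1 + β) ^ 2 - (a * y + b * x) := by
    rw [hEt]; ring
  linarith [key, hlhs.le, hlhs.ge]
end
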